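/- arXiv:1107.5709 — 3 statements merged into one kernel-verified Lean document; each statement's English description precedes it below -/
import Mathlib

section
/- Let n be an odd positive integer with least prime factor p, and let r be an integer with 2 ≤ r < p. Then β(n,r) = (-1)^⌊r/2⌋ · C((n-1)/2 - ⌈r/2⌉, ⌊r/2⌋) − C((n-1)/2, r) · (-2)^r is congruent to 0 modulo n. -/
open Nat Finset

private lemma cast_descFactorial_prod {R : Type*} [CommRing R] (a r : ℕ) :
    ((a.descFactorial r : ℕ) : R) = ∏ j ∈ range r, ((a : R) - j) := by
  induction r with
  | zero => simp
  | succ r ih =>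
    rcases le_or_gt r a with h | h
    · rw [Nat.descFactorial_succ, prod_range_succ, mul_comm]
      push_cast [h, ih]
      ring
    · rw [Nat.descFactorial_succ, Nat.descFactorial_eq_zero_iff_lt.2 h, Nat.mul_zero]
      rw [eq_comm]
      push_cast
      refine Finset.prod_eq_zero (Finset.mem_range.2 (show a < r + 1 by omega)) ?_
      simp

private lemma factorial_split (r : ℕ) :
    r ! = 2 ^ (r / 2) * (r / 2)! * ∏ j ∈ range ((r + 1) / 2), (2 * j + 1) := by
  induction r with
  | zero => simp
  | succ r ih =>
    rcases Nat.even_or_odd r with ⟨t, ht⟩ | ⟨t, ht⟩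
    · have h1 : r / 2 = t := by omega
      have h2 : (r + 1) / 2 = t := by omega
      have h3 : (r + 1 + 1) / 2 = t + 1 := by omega
      have h4 : r + 1 = 2 * t + 1 := by omega
      rw [Nat.factorial_succ, ih, h1, h2, h3, prod_range_succ, h4]
      ring
    · have h1 : r / 2 = t := by omega
      have h2 : (r + 1) / 2 = t + 1 := by omega
      have h3 : (r + 1 + 1) / 2 = t + 1 := by omega
      have h4 : r + 1 = 2 * (t + 1) := by omega
      rw [Nat.factorial_succ, ih, h1, h2, h3, Nat.factorial_succ, h4, pow_succ]
      ring

theorem beta_eq_zero_of_lt_minFac (n : ℕ) (hn : Odd n) (hpos : 0 < n)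
    (r : ℕ) (hr2 : 2 ≤ r) (hrp : r < n.minFac) :
    (n : ℤ) ∣ ((-1) ^ (r / 2) * (((n - 1) / 2 - (r + 1) / 2).choose (r / 2) : ℤ)
      - (((n - 1) / 2).choose r : ℤ) * (-2) ^ r) := by
  haveI : NeZero n := ⟨hpos.ne'⟩
  set m := (n - 1) / 2 with hm
  set k := r / 2 with hk
  set c := (r + 1) / 2 with hc
  obtain ⟨t, ht⟩ := hn
  have hn1 : n = 2 * m + 1 := by omega
  have hmf : n.minFac ≤ n := Nat.minFac_le hpos
  have hcm : c ≤ m := by omega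
  have hck : c + k = r := by omega
  have hcop : Nat.Coprime (r !) n := by
    by_contra h
    obtain ⟨q, hq, hq1, hq2⟩ := Nat.Prime.not_coprime_iff_dvd.1 h
    have h1 : q ≤ r := (Nat.Prime.dvd_factorial hq).1 hq1
    have h2 : n.minFac ≤ q := Nat.minFac_le_of_dvd hq.two_le hq2
    omega
  rw [← ZMod.intCast_zmod_eq_zero_iff_dvd]
  have hu : IsUnit ((r ! : ℕ) : ZMod n) := (ZMod.isUnit_iff_coprime _ _).2 hcop
  refine hu.mul_left_cancel ?_
  rw [mul_zero]
  push_cast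
  have h2m : (2 * (m : ZMod n) + 1) = 0 := by
    have hz : ((2 * m + 1 : ℕ) : ZMod n) = 0 := by rw [← hn1]; exact ZMod.natCast_self n
    push_cast at hz
    linear_combination hz
  -- right term: r! * C(m,r) * (-2)^r = ∏_{j<r} (2j+1)
  have hE1 : ((r ! : ℕ) : ZMod n) * (m.choose r : ZMod n) * (-2) ^ r
      = ∏ j ∈ range r, (2 * (j : ZMod n) + 1) := by
    have hd2 : ((r ! : ℕ) : ZMod n) * (m.choose r : ZMod n)
        = ∏ j ∈ range r, ((m : ZMod n) - j) := by
      rw [← cast_descFactorial_prod m r, Nat.descFactorial_eq_factorial_mul_choose]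
      push_cast; ring
    rw [hd2, show ((-2 : ZMod n)) ^ r = ∏ _j ∈ range r, (-2 : ZMod n) by simp,
      ← Finset.prod_mul_distrib]
    refine Finset.prod_congr rfl fun j hj => ?_
    linear_combination (-1 : ZMod n) * h2m
  -- left term: r! * (-1)^k * C(m - c, k) = ∏_{j<r} (2j+1)
  have hE2 : ((r ! : ℕ) : ZMod n) * ((-1) ^ k * ((m - c).choose k : ZMod n))
      = ∏ j ∈ range r, (2 * (j : ZMod n) + 1) := by
    have hd3 : (((k)! : ℕ) : ZMod n) * ((m - c).choose k : ZMod n)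
        = ∏ j ∈ range k, ((m : ZMod n) - c - j) := by
      have h := cast_descFactorial_prod (R := ZMod n) (m - c) k
      rw [Nat.descFactorial_eq_factorial_mul_choose] at h
      push_cast [hcm] at h
      rw [h]
    have hsplit := factorial_split r
    rw [← hk, ← hc] at hsplit
    calc ((r ! : ℕ) : ZMod n) * ((-1) ^ k * ((m - c).choose k : ZMod n))
        = (∏ j ∈ range c, (2 * (j : ZMod n) + 1)) *
            ((-2) ^ k * ((((k)! : ℕ) : ZMod n) * ((m - c).choose k : ZMod n))) := by
          rw [hsplit, show ((-2 : ZMod n)) ^ k = (-1) ^ k * 2 ^ k by rw [← neg_one_mul, mul_pow]]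
          push_cast; ring
      _ = (∏ j ∈ range c, (2 * (j : ZMod n) + 1)) *
            (∏ j ∈ range k, (2 * ((c + j : ℕ) : ZMod n) + 1)) := by
          rw [hd3, show ((-2 : ZMod n)) ^ k = ∏ _j ∈ range k, (-2 : ZMod n) by simp,
            ← Finset.prod_mul_distrib]
          congr 1
          refine Finset.prod_congr rfl fun j hj => ?_
          push_cast
          linear_combination (-1 : ZMod n) * h2m
      _ = ∏ j ∈ range r, (2 * (j : ZMod n) + 1) := by
          rw [← hck, Finset.prod_range_add]
  linear_combination hE2 - hE1
end

section
/- Define polynomials Ψ_n(X) for odd n by Ψ_1 = 1, Ψ_3 = X + 1, and Ψ_{2j+3} = X·Ψ_{2j+1} − Ψ_{2j-1}. Then for every odd prime p, Ψ_p(X) ≡ (X − 2)^{(p-1)/2} (mod p), i.e., all coefficients of Ψ_p(X) − (X−2)^{(p-1)/2} are divisible by p. -/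
open Polynomial

/-- `psi k` is the polynomial `Ψ_{2k+1}` defined by `Ψ_1 = 1`, `Ψ_3 = X + 1`,
`Ψ_{2j+3} = X·Ψ_{2j+1} − Ψ_{2j-1}`. -/
noncomputable def psi : ℕ → Polynomial ℤ
  | 0 => 1
  | 1 => X + 1
  | (k + 2) => X * psi (k + 1) - psi k

lemma psi_add_two (k : ℕ) : psi (k + 2) = X * psi (k + 1) - psi k := rfl

/-- Catalan-type identity. -/
lemma psi_catalan : ∀ k : ℕ, psi (k + 1) ^ 2 = psi k * psi (k + 2) + X + 2 := by
  intro k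
  induction k with
  | zero =>
    simp only [psi]
    ring
  | succ k ih =>
    rw [psi_add_two (k + 1)]
    linear_combination ih + psi (k + 2) * psi_add_two k

/-- Relation with the Dickson (Lucas-type) polynomials. -/
lemma psi_dickson : ∀ k : ℕ,
    (X - 2) * psi k ^ 2 = dickson 1 (1 : ℤ) (2 * k + 1) - 2 ∧
    (X - 2) * (psi k * psi (k + 1)) = dickson 1 (1 : ℤ) (2 * k + 2) - X := by
  intro k
  induction k with
  | zero =>
    constructor
    · simp [psi, dickson_one]
    · have h2 : dickson 1 (1 : ℤ) 2 = X ^ 2 - 2 := by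
        rw [dickson_two, C_1]; norm_num
      rw [h2]
      simp only [psi]
      ring
  | succ k ih =>
    obtain ⟨h1, h2⟩ := ih
    have hd3 : dickson 1 (1 : ℤ) (2 * (k + 1) + 1)
        = X * dickson 1 (1 : ℤ) (2 * k + 2) - dickson 1 (1 : ℤ) (2 * k + 1) := by
      have := dickson_add_two (R := ℤ) (k := 1) (a := 1) (2 * k + 1)
      simpa [show 2 * k + 1 + 2 = 2 * (k + 1) + 1 by ring,
        show 2 * k + 1 + 1 = 2 * k + 2 by ring] using this
    have hd4 : dickson 1 (1 : ℤ) (2 * (k + 1) + 2)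
        = X * dickson 1 (1 : ℤ) (2 * (k + 1) + 1) - dickson 1 (1 : ℤ) (2 * k + 2) := by
      have := dickson_add_two (R := ℤ) (k := 1) (a := 1) (2 * k + 2)
      simpa [show 2 * k + 2 + 2 = 2 * (k + 1) + 2 by ring,
        show 2 * k + 2 + 1 = 2 * (k + 1) + 1 by ring] using this
    have hcat := psi_catalan k
    have hrec := psi_add_two k
    have key1 : (X - 2) * psi (k + 1) ^ 2 = dickson 1 (1 : ℤ) (2 * (k + 1) + 1) - 2 := by
      rw [hd3]
      linear_combination (X - 2) * hcat + ((X - 2) * psi k) * hrec + X * h2 - h1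
    refine ⟨key1, ?_⟩
    rw [hd4, psi_add_two k]
    linear_combination X * key1 - h2

lemma psi_monic_degree : ∀ k : ℕ, (psi k).Monic ∧ (psi k).degree = k := by
  have H : ∀ k : ℕ, ((psi k).Monic ∧ (psi k).degree = k) ∧
      ((psi (k + 1)).Monic ∧ (psi (k + 1)).degree = (k + 1 : ℕ)) := by
    intro k
    induction k with
    | zero =>
      refine ⟨⟨monic_one, degree_one⟩, ?_, ?_⟩
      · show (X + C (1 : ℤ)).Monic
        exact monic_X_add_C 1
      · show (X + C (1 : ℤ)).degree = ((0 + 1 : ℕ) : WithBot ℕ)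
        rw [degree_X_add_C]
        simp
    | succ k ih =>
      obtain ⟨⟨hm0, hd0⟩, hm1, hd1⟩ := ih
      refine ⟨⟨hm1, hd1⟩, ?_⟩
      have hmul : (X * psi (k + 1)).Monic := monic_X.mul hm1
      have hdmul : (X * psi (k + 1)).degree = ((k + 2 : ℕ) : WithBot ℕ) := by
        rw [degree_mul, degree_X, hd1]
        push_cast
        ring
      have hlt : (psi k).degree < (X * psi (k + 1)).degree := by
        rw [hd0, hdmul]
        exact_mod_cast Nat.lt_succ_of_lt (Nat.lt_succ_self k)
      rw [psi_add_two k]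
      exact ⟨hmul.sub_of_left hlt, by rw [degree_sub_eq_left_of_degree_lt hlt, hdmul]⟩
  exact fun k => (H k).1

theorem psi_prime_congr (p : ℕ) (hp : p.Prime) (hodd : Odd p) :
    ∀ k : ℕ, (p : ℤ) ∣ (psi ((p - 1) / 2) - (X - 2) ^ ((p - 1) / 2)).coeff k := by
  haveI : Fact p.Prime := ⟨hp⟩
  obtain ⟨n, hn⟩ := hodd
  have hn' : (p - 1) / 2 = n := by omega
  rw [hn']
  set φ := Int.castRingHom (ZMod p)
  set A : Polynomial (ZMod p) := (psi n).map φ with hA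
  -- map the Dickson identity mod p
  have hint := (psi_dickson n).1
  have hmap : (X - 2 : Polynomial (ZMod p)) * A ^ 2 = X ^ p - 2 := by
    have := congrArg (Polynomial.map φ) hint
    simp only [Polynomial.map_mul, Polynomial.map_sub, Polynomial.map_pow, Polynomial.map_X,
      Polynomial.map_ofNat, map_dickson] at this
    have hφ1 : φ (1 : ℤ) = 1 := map_one φ
    rw [hφ1] at this
    rw [show 2 * n + 1 = p by omega] at this
    rw [dickson_one_one_zmod_p p] at this
    exact this
  -- (X - 2)^p = X^p - 2 in char p
  have hXp : (X - 2 : Polynomial (ZMod p)) ^ p = X ^ p - 2 := by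
    have h1 : (X - 2 : Polynomial (ZMod p)) ^ p = X ^ p - 2 ^ p := sub_pow_char _ _
    have h2 : ((2 : Polynomial (ZMod p))) ^ p = 2 := by
      have : ((2 : ZMod p)) ^ p = 2 := ZMod.pow_card 2
      have hC : (2 : Polynomial (ZMod p)) = C (2 : ZMod p) := (map_ofNat C 2).symm
      rw [hC, ← C_pow, this]
    rw [h1, h2]
  have hX2 : (X - 2 : Polynomial (ZMod p)) ≠ 0 := by
    rw [show (2 : Polynomial (ZMod p)) = C 2 from (map_ofNat C 2).symm]
    exact X_sub_C_ne_zero 2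
  have hsq : A ^ 2 = ((X - 2 : Polynomial (ZMod p)) ^ n) ^ 2 := by
    apply mul_left_cancel₀ hX2
    rw [hmap, ← hXp]
    rw [← pow_mul, ← pow_succ']
    congr 1
    omega
  have hzero : (A - (X - 2) ^ n) * (A + (X - 2) ^ n) = 0 := by
    linear_combination hsq
  have hmonicA : A.Monic := ((psi_monic_degree n).1).map φ
  have hcase := mul_eq_zero.mp hzero
  have hAeq : A = (X - 2 : Polynomial (ZMod p)) ^ n := by
    rcases hcase with h | h
    · exact sub_eq_zero.mp h
    · exfalso
      have hAneg : A = -((X - 2 : Polynomial (ZMod p)) ^ n) := by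
        linear_combination h
      have hm2 : ((X - 2 : Polynomial (ZMod p)) ^ n).Monic := by
        rw [show (2 : Polynomial (ZMod p)) = C 2 from (map_ofNat C 2).symm]
        exact (monic_X_sub_C 2).pow n
      have h1 : (1 : ZMod p) = -1 := by
        have := congrArg leadingCoeff hAneg
        rw [hmonicA.leadingCoeff, leadingCoeff_neg, hm2.leadingCoeff] at this
        exact this
      have h20 : (2 : ZMod p) = 0 := by linear_combination h1
      have : (p : ℕ) ∣ 2 := by
        have := (ZMod.natCast_eq_zero_iff 2 p).mp (by exact_mod_cast h20)
        exact this
      have hp2 : p = 2 := (Nat.prime_dvd_prime_iff_eq hp Nat.prime_two).mp this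
      omega
  have hfinal : (psi n - (X - 2) ^ n).map φ = 0 := by
    rw [Polynomial.map_sub, Polynomial.map_pow, Polynomial.map_sub, Polynomial.map_X,
      Polynomial.map_ofNat, ← hA, hAeq, sub_self]
  intro k
  have := congrArg (fun q => q.coeff k) hfinal
  simp only [Polynomial.coeff_map, Polynomial.coeff_zero] at this
  exact (ZMod.intCast_zmod_eq_zero_iff_dvd _ p).mp this
end

section
/- Let Δ be a nonsquare integer and (X,Y) a point with X² − ΔY² = 4 under the group law (X₁,Y₁)+(X₂,Y₂) = ((X₁X₂+ΔY₁Y₂)/2, (X₁Y₂+X₂Y₁)/2) with identity (2,0). For odd positive n, the X-coordinate of n·(X,Y) equals (X − 2)·Ψ_n(X)² + 2, where Ψ_n is defined by Ψ_1 = 1, Ψ_3 = X+1, Ψ_{2j+3} = X·Ψ_{2j+1} − Ψ_{2j-1}. -/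
open Polynomial

/-- The Pell conic group law on pairs of rationals. -/
def pellAdd (Δ : ℤ) (P Q : ℚ × ℚ) : ℚ × ℚ :=
  ((P.1 * Q.1 + Δ * P.2 * Q.2) / 2, (P.1 * Q.2 + Q.1 * P.2) / 2)

/-- The `n`-fold sum of a point with itself, with identity `(2, 0)`. -/
def pellNsmul (Δ : ℤ) : ℕ → ℚ × ℚ → ℚ × ℚ
  | 0, _ => (2, 0)
  | (k + 1), P => pellAdd Δ (pellNsmul Δ k P) P

/-- Scalar model of the iterated group law: `AB x n = (Aₙ, Bₙ)` with
`n·(x,y) = (Aₙ, y·Bₙ)` whenever `Δ y² = x² − 4`. -/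
noncomputable def AB (x : ℚ) : ℕ → ℚ × ℚ
  | 0 => (2, 0)
  | (n + 1) =>
      (((AB x n).1 * x + (x ^ 2 - 4) * (AB x n).2) / 2,
       ((AB x n).1 + x * (AB x n).2) / 2)

lemma pellNsmul_eq_AB (Δ : ℤ) (x y : ℚ) (hP : x ^ 2 - Δ * y ^ 2 = 4) (n : ℕ) :
    pellNsmul Δ n (x, y) = ((AB x n).1, y * (AB x n).2) := by
  induction n with
  | zero => simp [pellNsmul, AB]
  | succ k ih =>
      have hy : (Δ : ℚ) * y ^ 2 = x ^ 2 - 4 := by linarith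
      simp only [pellNsmul, ih, pellAdd, AB, Prod.mk.injEq]
      constructor
      · field_simp
        linear_combination (AB x k).2 * hy
      · ring

lemma AB_fst_rec (x : ℚ) (n : ℕ) :
    (AB x (n + 2)).1 = x * (AB x (n + 1)).1 - (AB x n).1 := by
  simp only [AB]; ring

/-- evaluated psi -/
lemma psi_rec (x : ℚ) (k : ℕ) :
    aeval x (psi (k + 2)) = x * aeval x (psi (k + 1)) - aeval x (psi k) := by
  rw [psi]; simp

lemma psi_invariant (x : ℚ) (k : ℕ) :
    (aeval x (psi (k + 1))) ^ 2 - x * aeval x (psi (k + 1)) * aeval x (psi k)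
      + (aeval x (psi k)) ^ 2 = x + 2 := by
  induction k with
  | zero => simp [psi]; ring
  | succ j ih =>
      rw [psi_rec]
      linear_combination ih

lemma A_odd (x : ℚ) (k : ℕ) :
    (AB x (2 * k + 1)).1 = (x - 2) * (aeval x (psi k)) ^ 2 + 2 := by
  induction k using Nat.strong_induction_on with
  | _ k ih =>
    match k with
    | 0 => simp [AB, psi]
    | 1 => simp [AB, psi]; ring
    | (j + 2) =>
      have h1 := ih (j + 1) (by omega)
      have h0 := ih j (by omega)
      have r1 := AB_fst_rec x (2 * j + 3)
      have r2 := AB_fst_rec x (2 * j + 2)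
      have r3 := AB_fst_rec x (2 * j + 1)
      have inv := psi_invariant x j
      have hp := psi_rec x j
      have e1 : 2 * (j + 2) + 1 = (2 * j + 3) + 2 := by ring
      have e2 : 2 * (j + 1) + 1 = 2 * j + 3 := by ring
      rw [e1, r1]
      rw [e2] at h1
      have r2' : (AB x (2 * j + 4)).1 = x * (AB x (2*j+3)).1 - (AB x (2*j+2)).1 := r2
      rw [show (2*j+3)+1 = 2*j+4 from rfl, r2']
      have r3' : (AB x (2 * j + 3)).1 = x * (AB x (2*j+2)).1 - (AB x (2*j+1)).1 := r3
      rw [hp]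
      linear_combination (x^2 - 2) * h1 - h0 + r3' - 2*(x-2)*inv

theorem pell_nsmul_fst_eq (Δ : ℤ) (hΔ : ¬ IsSquare Δ) (x y : ℚ)
    (hP : x ^ 2 - Δ * y ^ 2 = 4) (n : ℕ) (hn : Odd n) (hpos : 0 < n) :
    (pellNsmul Δ n (x, y)).1 = (x - 2) * (Polynomial.aeval x (psi ((n - 1) / 2))) ^ 2 + 2 := by
  obtain ⟨k, hk⟩ := hn
  subst hk
  have hdiv : (2 * k + 1 - 1) / 2 = k := by omega
  rw [pellNsmul_eq_AB Δ x y hP, hdiv]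
  exact A_odd x k
end
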